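/- (n-th Jensen formula, characteristic-function form) Let n ≥ 1 and let f be an n-th tropical meromorphic function on ℝ. Then for every r > 0, T(r, f) = T(r, 1_0 ⊘ f) + f(0), i.e. T(r, f) = T(r, −f) + f(0). -/

import Mathlib

open Filter MeasureTheory Asymptotics Polynomial
open scoped Classical

noncomputable section

namespace Trop

/-- sign from the right: `sgn(x⁺)` (equal to `sgn x` for `x ≠ 0`, and `+1` at `0`). -/
def sgnR (x : ℝ) : ℝ := if x < 0 then -1 else 1

/-- sign from the left: `sgn(x⁻)` (equal to `sgn x` for `x ≠ 0`, and `-1` at `0`). -/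
def sgnL (x : ℝ) : ℝ := if 0 < x then 1 else -1

/-- `p` is the polynomial piece of `f` immediately to the right of `x`. -/
def IsRightPiece (f : ℝ → ℝ) (x : ℝ) (p : Polynomial ℝ) : Prop :=
  ∃ ε > (0 : ℝ), ∀ y ∈ Set.Ico x (x + ε), f y = p.eval y

/-- `p` is the polynomial piece of `f` immediately to the left of `x`. -/
def IsLeftPiece (f : ℝ → ℝ) (x : ℝ) (p : Polynomial ℝ) : Prop :=
  ∃ ε > (0 : ℝ), ∀ y ∈ Set.Ioc (x - ε) x, f y = p.eval y

/-- The right polynomial piece of `f` at `x` (junk value `0` if none exists). -/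
def rightPoly (f : ℝ → ℝ) (x : ℝ) : Polynomial ℝ :=
  if h : ∃ p, IsRightPiece f x p then h.choose else 0

/-- The left polynomial piece of `f` at `x` (junk value `0` if none exists). -/
def leftPoly (f : ℝ → ℝ) (x : ℝ) : Polynomial ℝ :=
  if h : ∃ p, IsLeftPiece f x p then h.choose else 0

/-- The one-sided `j`-th derivative `f^{(j)}(x⁺)` from the right. -/
def rderiv (f : ℝ → ℝ) (j : ℕ) (x : ℝ) : ℝ :=
  ((fun q : Polynomial ℝ => Polynomial.derivative q)^[j] (rightPoly f x)).eval x

/-- The one-sided `j`-th derivative `f^{(j)}(x⁻)` from the left. -/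
def lderiv (f : ℝ → ℝ) (j : ℕ) (x : ℝ) : ℝ :=
  ((fun q : Polynomial ℝ => Polynomial.derivative q)^[j] (leftPoly f x)).eval x

/-- `ω_f^{(j)}(x) = (sgn^{j+1}(x⁺) f^{(j)}(x⁺) − sgn^{j+1}(x⁻) f^{(j)}(x⁻))/j!`. -/
def omega (f : ℝ → ℝ) (j : ℕ) (x : ℝ) : ℝ :=
  (sgnR x ^ (j + 1) * rderiv f j x - sgnL x ^ (j + 1) * lderiv f j x) / (Nat.factorial j : ℝ)

/-- `τ_f^{(j)}(x) = (f^{(j)}(x⁺) − f^{(j)}(x⁻))/j!`. -/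
def tau (f : ℝ → ℝ) (j : ℕ) (x : ℝ) : ℝ :=
  (rderiv f j x - lderiv f j x) / (Nat.factorial j : ℝ)

/-- A continuous piecewise polynomial function: there is a strictly increasing doubly infinite
sequence of breakpoints with no finite accumulation point, on each segment `f` agrees with a
polynomial of degree at most `n`, and the supremum of the degrees of the pieces equals `n`. -/
def IsNthPiecewisePoly (n : ℕ) (f : ℝ → ℝ) : Prop :=
  Continuous f ∧
  ∃ (x : ℤ → ℝ) (p : ℤ → Polynomial ℝ),
    StrictMono x ∧
    Tendsto x atTop atTop ∧ Tendsto x atBot atBot ∧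
    (∀ i : ℤ, ∀ y ∈ Set.Icc (x (i - 1)) (x i), f y = (p i).eval y) ∧
    (∀ i : ℤ, (p i).natDegree ≤ n) ∧
    (∃ i : ℤ, (p i).natDegree = n)

/-- `f` has no `j`-th poles for any `j ≥ 1`. -/
def NoPoles (f : ℝ → ℝ) : Prop := ∀ j : ℕ, 1 ≤ j → ∀ x : ℝ, 0 ≤ omega f j x

/-- `f` has no `j`-th roots for any `j ≥ 1`. -/
def NoRoots (f : ℝ → ℝ) : Prop := ∀ j : ℕ, 1 ≤ j → ∀ x : ℝ, omega f j x ≤ 0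

/-- An `n`-th tropical meromorphic function. -/
def IsTropicalMeromorphic (n : ℕ) (f : ℝ → ℝ) : Prop :=
  IsNthPiecewisePoly n f ∧ ¬ ∃ c : ℝ, ∀ x : ℝ, f x = c

/-- An `n`-th tropical entire function (no poles; constants allowed when `n = 0`). -/
def IsTropicalEntire (n : ℕ) (f : ℝ → ℝ) : Prop :=
  IsNthPiecewisePoly n f ∧ NoPoles f

/-- The `n`-th max-plus proximity function `m(r, f)`. -/
def mProx (r : ℝ) (f : ℝ → ℝ) : ℝ := (max (f r) 0 + max (f (-r)) 0) / 2

/-- The `j`-th integrated max-plus counting function of poles,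
`N^{(j)}(r, f) = (1/2) Σ_z |ω_f^{(j)}(z)| (r − |z|)^j` over the `j`-th poles `z` in `(−r, r)`. -/
def Npole (j : ℕ) (r : ℝ) (f : ℝ → ℝ) : ℝ :=
  (1 / 2) * ∑' z : {z : ℝ // z ∈ Set.Ioo (-r) r ∧ omega f j z < 0},
    |omega f j z.1| * (r - |z.1|) ^ j

/-- The `j`-th integrated counting function of roots, `N^{(j)}(r, 1₀ ⊘ f)`. -/
def Nroot (j : ℕ) (r : ℝ) (f : ℝ → ℝ) : ℝ :=
  (1 / 2) * ∑' z : {z : ℝ // z ∈ Set.Ioo (-r) r ∧ 0 < omega f j z},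
    |omega f j z.1| * (r - |z.1|) ^ j

/-- Partial pole-counting function restricted to a set `I`. -/
def NpoleIn (j : ℕ) (r : ℝ) (I : Set ℝ) (f : ℝ → ℝ) : ℝ :=
  (1 / 2) * ∑' z : {z : ℝ // z ∈ I ∧ omega f j z < 0},
    |omega f j z.1| * (r - |z.1|) ^ j

/-- Partial root-counting function restricted to a set `I`. -/
def NrootIn (j : ℕ) (r : ℝ) (I : Set ℝ) (f : ℝ → ℝ) : ℝ :=
  (1 / 2) * ∑' z : {z : ℝ // z ∈ I ∧ 0 < omega f j z},
    |omega f j z.1| * (r - |z.1|) ^ j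

/-- The `n`-th max-plus characteristic function `T(r, f)`. -/
def Tchar (n : ℕ) (r : ℝ) (f : ℝ → ℝ) : ℝ :=
  mProx r f + ∑ j ∈ Finset.Icc 1 n, Npole j r f

/-- The hyper-order `ρ₂(f) = limsup_{r→∞} log log T(r,f) / log r`. -/
def hyperOrder (n : ℕ) (f : ℝ → ℝ) : ℝ :=
  Filter.limsup (fun r : ℝ => Real.log (Real.log (Tchar n r f)) / Real.log r) Filter.atTop

/-- `E ⊆ (1, ∞)` has finite logarithmic measure: `∫_E dt/t < ∞`. -/
def FiniteLogMeasure (E : Set ℝ) : Prop :=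
  E ⊆ Set.Ioi 1 ∧ (∫⁻ t in E, ENNReal.ofReal (1 / t)) < ⊤

/-- A well defined polynomial: apart from the constant term, only the coefficients whose index
has the same parity as the degree survive, and they all have the same sign. -/
def WellDefinedPoly (p : Polynomial ℝ) : Prop :=
  (∀ k : ℕ, 1 ≤ k → k % 2 ≠ p.natDegree % 2 → p.coeff k = 0) ∧
  ((∀ k : ℕ, 1 ≤ k → 0 ≤ p.coeff k) ∨ (∀ k : ℕ, 1 ≤ k → p.coeff k ≤ 0))

/-- A piecewise polynomial function is well defined if all its polynomial pieces are. -/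
def WellDefinedFn (f : ℝ → ℝ) : Prop :=
  ∀ x : ℝ, WellDefinedPoly (rightPoly f x) ∧ WellDefinedPoly (leftPoly f x)

/-- The pointwise maximum of the components of a representation of a tropical holomorphic curve. -/
def Fmax {m : ℕ} (f : Fin (m + 1) → ℝ → ℝ) (x : ℝ) : ℝ := ⨆ i, f i x

/-- The tropical Cartan characteristic function of the curve represented by `f`. -/
def TCartan {m : ℕ} (f : Fin (m + 1) → ℝ → ℝ) (r : ℝ) : ℝ :=
  (Fmax f r + Fmax f (-r)) / 2 - Fmax f 0

/-- `f` is a representation of an `n`-th tropical holomorphic curve `ℝ → TP^m`: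
each component is an `n_i`-th tropical entire function and `max_i n_i = n`. -/
def IsHoloCurveRep (n : ℕ) {m : ℕ} (f : Fin (m + 1) → ℝ → ℝ) : Prop :=
  ∃ d : Fin (m + 1) → ℕ, (∀ i, IsTropicalEntire (d i) (f i)) ∧ Finset.univ.sup d = n

/-- A reduced representation: the components have no common `j`-th roots. -/
def ReducedRep {m : ℕ} (f : Fin (m + 1) → ℝ → ℝ) : Prop :=
  ¬ ∃ (j : ℕ) (x : ℝ), 1 ≤ j ∧ ∀ i, 0 < omega (f i) j x

/-- Two representations define the same curve in `TP^m`: pointwise they differ by a scalar. -/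
def SameCurve {m : ℕ} (f g : Fin (m + 1) → ℝ → ℝ) : Prop :=
  ∀ x : ℝ, ∃ lam : ℝ, ∀ i, f i x = g i x + lam

/-- The curve represented by `f` is non-constant. -/
def NonConstantCurve {m : ℕ} (f : Fin (m + 1) → ℝ → ℝ) : Prop :=
  ¬ ∀ x y : ℝ, ∃ lam : ℝ, ∀ i, f i x = f i y + lam

/-- The tropical Casoratian `C₀(f₀, …, f_m)(x) = max_σ Σ_i f_i(x + σ(i))`. -/
def Casoratian {m : ℕ} (f : Fin (m + 1) → ℝ → ℝ) (x : ℝ) : ℝ :=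
  ⨆ σ : Equiv.Perm (Fin (m + 1)), ∑ i, f i (x + ((σ i : ℕ) : ℝ))

end Trop

end


noncomputable section
namespace TropAux
open Trop Polynomial Filter

lemma rightPiece_unique {f : ℝ → ℝ} {x : ℝ} {p q : Polynomial ℝ}
    (hp : IsRightPiece f x p) (hq : IsRightPiece f x q) : p = q := by
  obtain ⟨ε, hε, hp⟩ := hp
  obtain ⟨δ, hδ, hq⟩ := hq
  apply Polynomial.eq_of_infinite_eval_eq
  refine Set.Infinite.mono ?_ (Set.Ico_infinite (show x < x + min ε δ by
    have := lt_min hε hδ; linarith))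
  intro y hy
  have h1 : y ∈ Set.Ico x (x + ε) := ⟨hy.1, lt_of_lt_of_le hy.2 (by
    have := min_le_left ε δ; linarith)⟩
  have h2 : y ∈ Set.Ico x (x + δ) := ⟨hy.1, lt_of_lt_of_le hy.2 (by
    have := min_le_right ε δ; linarith)⟩
  show p.eval y = q.eval y
  rw [← hp y h1, ← hq y h2]

lemma leftPiece_unique {f : ℝ → ℝ} {x : ℝ} {p q : Polynomial ℝ}
    (hp : IsLeftPiece f x p) (hq : IsLeftPiece f x q) : p = q := by
  obtain ⟨ε, hε, hp⟩ := hp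
  obtain ⟨δ, hδ, hq⟩ := hq
  apply Polynomial.eq_of_infinite_eval_eq
  refine Set.Infinite.mono ?_ (Set.Ioc_infinite (show x - min ε δ < x by
    have := lt_min hε hδ; linarith))
  intro y hy
  have h1 : y ∈ Set.Ioc (x - ε) x := ⟨lt_of_le_of_lt (by
    have := min_le_left ε δ; linarith) hy.1, hy.2⟩
  have h2 : y ∈ Set.Ioc (x - δ) x := ⟨lt_of_le_of_lt (by
    have := min_le_right ε δ; linarith) hy.1, hy.2⟩
  show p.eval y = q.eval y
  rw [← hp y h1, ← hq y h2]

lemma rightPoly_eq {f : ℝ → ℝ} {x : ℝ} {p : Polynomial ℝ}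
    (hp : IsRightPiece f x p) : rightPoly f x = p := by
  have hex : ∃ q, IsRightPiece f x q := ⟨p, hp⟩
  rw [rightPoly, dif_pos hex]
  exact rightPiece_unique hex.choose_spec hp

lemma leftPoly_eq {f : ℝ → ℝ} {x : ℝ} {p : Polynomial ℝ}
    (hp : IsLeftPiece f x p) : leftPoly f x = p := by
  have hex : ∃ q, IsLeftPiece f x q := ⟨p, hp⟩
  rw [leftPoly, dif_pos hex]
  exact leftPiece_unique hex.choose_spec hp

lemma isRightPiece_neg {f : ℝ → ℝ} {x : ℝ} {p : Polynomial ℝ}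
    (hp : IsRightPiece f x p) : IsRightPiece (fun y => -(f y)) x (-p) := by
  obtain ⟨ε, hε, h⟩ := hp
  exact ⟨ε, hε, fun y hy => by simp [h y hy]⟩

lemma isLeftPiece_neg {f : ℝ → ℝ} {x : ℝ} {p : Polynomial ℝ}
    (hp : IsLeftPiece f x p) : IsLeftPiece (fun y => -(f y)) x (-p) := by
  obtain ⟨ε, hε, h⟩ := hp
  exact ⟨ε, hε, fun y hy => by simp [h y hy]⟩

lemma D_eq (j : ℕ) : (fun q : Polynomial ℝ => Polynomial.derivative q)^[j]
    = (Polynomial.derivative (R := ℝ) : Polynomial ℝ → Polynomial ℝ)^[j] := rfl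

lemma sgnR_eq_sgnL {z : ℝ} (hz : z ≠ 0) : sgnR z = sgnL z := by
  rcases lt_trichotomy z 0 with h | h | h
  · simp [sgnR, sgnL, h, not_lt.mpr h.le]
  · exact absurd h hz
  · simp [sgnR, sgnL, h, not_lt.mpr h.le]

lemma telescope (g : ℤ → ℝ) (a : ℤ) :
    ∀ b, a ≤ b → g b - g a = ∑ i ∈ Finset.Ico a b, (g (i+1) - g i) := by
  refine Int.le_induction ?_ ?_
  · simp
  · intro b hb ih
    have h1 : Finset.Ico a (b+1) = insert b (Finset.Ico a b) := by
      ext m; simp [Finset.mem_Ico]; omega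
    rw [h1, Finset.sum_insert (by simp), ← ih]; ring

lemma exists_least_lt (X : ℤ → ℝ) (hmono : StrictMono X) (htop : Tendsto X atTop atTop)
    (hbot : Tendsto X atBot atBot) (c : ℝ) :
    ∃ i : ℤ, X (i - 1) ≤ c ∧ c < X i ∧ ∀ k, c < X k → i ≤ k := by
  obtain ⟨a, ha⟩ := (hbot.eventually (eventually_lt_atBot c)).exists
  obtain ⟨b, hb⟩ := (htop.eventually (eventually_gt_atTop c)).exists
  obtain ⟨i, hi, hmin⟩ := Int.exists_least_of_bdd (P := fun i => c < X i)
    ⟨a, fun z hz => le_of_lt (hmono.lt_iff_lt.mp (ha.trans hz))⟩ ⟨b, hb⟩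
  refine ⟨i, ?_, hi, hmin⟩
  by_contra h
  have := hmin _ (lt_of_not_ge h)
  omega

lemma exists_least_le (X : ℤ → ℝ) (hmono : StrictMono X) (htop : Tendsto X atTop atTop)
    (hbot : Tendsto X atBot atBot) (c : ℝ) :
    ∃ i : ℤ, X (i - 1) < c ∧ c ≤ X i ∧ ∀ k, c ≤ X k → i ≤ k := by
  obtain ⟨a, ha⟩ := (hbot.eventually (eventually_lt_atBot c)).exists
  obtain ⟨b, hb⟩ := (htop.eventually (eventually_gt_atTop c)).exists
  obtain ⟨i, hi, hmin⟩ := Int.exists_least_of_bdd (P := fun i => c ≤ X i)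
    ⟨a, fun z hz => le_of_lt (hmono.lt_iff_lt.mp (lt_of_lt_of_le ha hz))⟩ ⟨b, hb.le⟩
  refine ⟨i, ?_, hi, hmin⟩
  by_contra h
  have := hmin _ (le_of_not_gt h)
  omega

lemma rightPoly_of_mem {f : ℝ → ℝ} {X : ℤ → ℝ} {p : ℤ → Polynomial ℝ}
    (heval : ∀ i : ℤ, ∀ y ∈ Set.Icc (X (i-1)) (X i), f y = (p i).eval y)
    (i : ℤ) (c : ℝ) (h1 : X (i-1) ≤ c) (h2 : c < X i) :
    rightPoly f c = p i := by
  apply rightPoly_eq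
  refine ⟨X i - c, by linarith, fun y hy => ?_⟩
  exact heval i y ⟨le_trans h1 hy.1, by have := hy.2; linarith⟩

lemma leftPoly_of_mem {f : ℝ → ℝ} {X : ℤ → ℝ} {p : ℤ → Polynomial ℝ}
    (heval : ∀ i : ℤ, ∀ y ∈ Set.Icc (X (i-1)) (X i), f y = (p i).eval y)
    (i : ℤ) (c : ℝ) (h1 : X (i-1) < c) (h2 : c ≤ X i) :
    leftPoly f c = p i := by
  apply leftPoly_eq
  refine ⟨c - X (i-1), by linarith, fun y hy => ?_⟩
  exact heval i y ⟨by have := hy.1; linarith, le_trans hy.2 h2⟩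

lemma poly_taylor_split (q : Polynomial ℝ) (n : ℕ) (hq : q.natDegree ≤ n) (s t : ℝ) :
    q.eval t = q.eval s + ∑ j ∈ Finset.Icc 1 n,
      ((fun q : Polynomial ℝ => Polynomial.derivative q)^[j] q).eval s * (t - s)^j
        / (Nat.factorial j : ℝ) := by
  have h1 : q.eval t = (Polynomial.taylor s q).eval (t - s) :=
    (Polynomial.taylor_eval_sub s q t).symm
  have h2 : (Polynomial.taylor s q).natDegree < n + 1 :=
    lt_of_le_of_lt (le_of_eq_of_le (Polynomial.natDegree_taylor q s) hq) (Nat.lt_succ_self n)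
  rw [h1, Polynomial.eval_eq_sum_range' h2]
  have hins : Finset.range (n+1) = insert 0 (Finset.Icc 1 n) := by
    ext m; simp [Nat.lt_succ_iff]; omega
  rw [hins, Finset.sum_insert (by simp)]
  congr 1
  · simp [Polynomial.taylor_coeff_zero]
  · refine Finset.sum_congr rfl fun j _ => ?_
    have h3 : (Polynomial.taylor s q).coeff j = (Polynomial.hasseDeriv j q).eval s :=
      Polynomial.taylor_coeff (r := s) (f := q) j
    have h4 : (Nat.factorial j) • (Polynomial.hasseDeriv j q) = Polynomial.derivative^[j] q := by
      have := congrFun (Polynomial.factorial_smul_hasseDeriv (R := ℝ) (k := j)) q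
      simpa using this
    have h5 : ((Nat.factorial j : ℝ)) * (Polynomial.hasseDeriv j q).eval s
        = (Polynomial.derivative^[j] q).eval s := by
      rw [← h4]; simp [Polynomial.eval_smul, nsmul_eq_mul]
    rw [D_eq, h3, ← h5]
    have hfac : (Nat.factorial j : ℝ) ≠ 0 := by positivity
    field_simp

lemma omega_eq_tau_of_pos (f : ℝ → ℝ) (j : ℕ) {z : ℝ} (hz : 0 < z) :
    omega f j z = tau f j z := by
  have h1 : sgnR z = 1 := by simp [sgnR, not_lt.mpr hz.le]
  have h2 : sgnL z = 1 := by simp [sgnL, hz]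
  unfold omega tau
  rw [h1, h2, one_pow, one_mul, one_mul]

lemma omega_neg_side (f : ℝ → ℝ) (j : ℕ) {z : ℝ} (r : ℝ) (hz : z < 0) :
    omega f j z * (r - |z|)^j = -(tau f j z * (-r - z)^j) := by
  have h1 : sgnR z = -1 := by simp [sgnR, hz]
  have h2 : sgnL z = -1 := by simp [sgnL, not_lt.mpr hz.le]
  rw [abs_of_neg hz]
  unfold omega tau
  rw [h1, h2]
  rw [show ((-r - z):ℝ) = (-1) * (r - -z) by ring, mul_pow, pow_succ]
  ring

lemma omega_zero_term (f : ℝ → ℝ) (j : ℕ) (r : ℝ) :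
    omega f j 0 * (r - |(0:ℝ)|)^j
      = rderiv f j 0 * r^j / (Nat.factorial j : ℝ)
        + lderiv f j 0 * (-r)^j / (Nat.factorial j : ℝ) := by
  have h1 : sgnR 0 = 1 := by simp [sgnR]
  have h2 : sgnL 0 = -1 := by simp [sgnL]
  unfold omega
  rw [h1, h2, abs_zero, sub_zero, one_pow, pow_succ, neg_pow]
  ring

lemma step_eq (n : ℕ) (f : ℝ → ℝ) (X : ℤ → ℝ) (p : ℤ → Polynomial ℝ)
    (hmono : StrictMono X)
    (heval : ∀ i : ℤ, ∀ y ∈ Set.Icc (X (i-1)) (X i), f y = (p i).eval y)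
    (hdeg : ∀ i : ℤ, (p i).natDegree ≤ n)
    (i : ℤ) (t : ℝ) :
    (p (i+1)).eval t - (p i).eval t
      = ∑ j ∈ Finset.Icc 1 n, tau f j (X i) * (t - X i)^j := by
  have hR : rightPoly f (X i) = p (i+1) := by
    apply rightPoly_of_mem heval (i+1) (X i)
    · rw [show i+1-1 = i by ring]
    · exact hmono (by omega)
  have hL : leftPoly f (X i) = p i :=
    leftPoly_of_mem heval i (X i) (hmono (by omega)) le_rfl
  have hq : (p (i+1) - p i).natDegree ≤ n :=
    le_trans (Polynomial.natDegree_sub_le _ _) (max_le (hdeg _) (hdeg _))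
  have h0 : (p (i+1) - p i).eval (X i) = 0 := by
    have e1 : f (X i) = (p (i+1)).eval (X i) := by
      apply heval (i+1) (X i)
      constructor
      · rw [show i+1-1 = i by ring]
      · exact (hmono (by omega : i < i + 1)).le
    have e2 : f (X i) = (p i).eval (X i) :=
      heval i (X i) ⟨(hmono (by omega : i - 1 < i)).le, le_rfl⟩
    simp [Polynomial.eval_sub]
    linarith
  have ht := poly_taylor_split (p (i+1) - p i) n hq (X i) t
  rw [h0, zero_add] at ht
  have hts : (p (i+1) - p i).eval t = (p (i+1)).eval t - (p i).eval t := by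
    simp [Polynomial.eval_sub]
  rw [hts] at ht
  rw [ht]
  refine Finset.sum_congr rfl fun j _ => ?_
  have hsub : (fun q : Polynomial ℝ => Polynomial.derivative q)^[j] (p (i+1) - p i)
      = (fun q : Polynomial ℝ => Polynomial.derivative q)^[j] (p (i+1))
        - (fun q : Polynomial ℝ => Polynomial.derivative q)^[j] (p i) := by
    rw [D_eq]
    exact Polynomial.iterate_derivative_sub
  rw [hsub]
  unfold tau rderiv lderiv
  rw [hR, hL, Polynomial.eval_sub]
  ring

lemma omega_neg (f : ℝ → ℝ)
    (hex : ∀ z : ℝ, (∃ p, IsRightPiece f z p) ∧ (∃ p, IsLeftPiece f z p))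
    (j : ℕ) (z : ℝ) :
    omega (fun y => -(f y)) j z = -(omega f j z) := by
  obtain ⟨⟨pR, hpR⟩, ⟨pL, hpL⟩⟩ := hex z
  have h1 : rightPoly f z = pR := rightPoly_eq hpR
  have h2 : rightPoly (fun y => -(f y)) z = -pR := rightPoly_eq (isRightPiece_neg hpR)
  have h3 : leftPoly f z = pL := leftPoly_eq hpL
  have h4 : leftPoly (fun y => -(f y)) z = -pL := leftPoly_eq (isLeftPiece_neg hpL)
  have hDneg : ∀ q : Polynomial ℝ,
      (fun q : Polynomial ℝ => Polynomial.derivative q)^[j] (-q)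
        = -((fun q : Polynomial ℝ => Polynomial.derivative q)^[j] q) := by
    intro q; rw [D_eq]; exact Polynomial.iterate_derivative_neg
  unfold omega rderiv lderiv
  rw [h1, h2, h3, h4, hDneg, hDneg, Polynomial.eval_neg, Polynomial.eval_neg]
  ring

lemma Npole_eq_sum (g : ℝ → ℝ) (j : ℕ) (r : ℝ) (F : Finset ℝ)
    (hsub : ∀ z ∈ Set.Ioo (-r) r, omega g j z < 0 → z ∈ F)
    (hF : ∀ z ∈ F, z ∈ Set.Ioo (-r) r) :
    Npole j r g
      = (1/2) * ∑ z ∈ F, (if omega g j z < 0 then -(omega g j z) * (r - |z|)^j else 0) := by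
  unfold Npole
  congr 1
  have h1 : ∑' z : {z : ℝ // z ∈ Set.Ioo (-r) r ∧ omega g j z < 0},
      |omega g j z.1| * (r - |z.1|) ^ j
      = ∑' z : ℝ, Set.indicator {z : ℝ | z ∈ Set.Ioo (-r) r ∧ omega g j z < 0}
          (fun z => |omega g j z| * (r - |z|) ^ j) z :=
    tsum_subtype {z : ℝ | z ∈ Set.Ioo (-r) r ∧ omega g j z < 0}
      (fun z => |omega g j z| * (r - |z|) ^ j)
  rw [h1, tsum_eq_sum (s := F) ?_]
  · refine Finset.sum_congr rfl fun z hz => ?_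
    by_cases h : omega g j z < 0
    · rw [Set.indicator_of_mem (show z ∈ {z : ℝ | z ∈ Set.Ioo (-r) r ∧ omega g j z < 0}
        from ⟨hF z hz, h⟩), if_pos h, abs_of_neg h, neg_mul]
    · rw [Set.indicator_of_notMem (fun hmem => h hmem.2), if_neg h]
  · intro z hz
    apply Set.indicator_of_notMem
    intro hmem
    exact hz (hsub z hmem.1 hmem.2)

lemma core (n : ℕ) (f : ℝ → ℝ) (X : ℤ → ℝ) (p : ℤ → Polynomial ℝ)
    (hmono : StrictMono X) (htop : Tendsto X atTop atTop) (hbot : Tendsto X atBot atBot)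
    (heval : ∀ i : ℤ, ∀ y ∈ Set.Icc (X (i-1)) (X i), f y = (p i).eval y)
    (hdeg : ∀ i : ℤ, (p i).natDegree ≤ n)
    (r : ℝ) (hr : 0 < r) :
    ∃ F : Finset ℝ, (∀ z ∈ F, z ∈ Set.Ioo (-r) r) ∧
      (∀ (j : ℕ) (z : ℝ), z ∈ Set.Ioo (-r) r → omega f j z ≠ 0 → z ∈ F) ∧
      f r + f (-r) - 2 * f 0
        = ∑ z ∈ F, ∑ j ∈ Finset.Icc 1 n, omega f j z * (r - |z|)^j := by
  obtain ⟨i₀, hi₀l, hi₀r, hi₀min⟩ := exists_least_lt X hmono htop hbot 0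
  obtain ⟨i₁, hi₁l, hi₁r, hi₁min⟩ := exists_least_le X hmono htop hbot r
  obtain ⟨k₀, hk₀l, hk₀r, hk₀min⟩ := exists_least_le X hmono htop hbot 0
  obtain ⟨k₁, hk₁l, hk₁r, hk₁min⟩ := exists_least_lt X hmono htop hbot (-r)
  have hi01 : i₀ ≤ i₁ := hi₀min i₁ (lt_of_lt_of_le hr hi₁r)
  have hk10 : k₁ ≤ k₀ := hk₁min k₀ (lt_of_lt_of_le (by linarith) hk₀r)
  have hposz : ∀ i ∈ Finset.Ico i₀ i₁, 0 < X i ∧ X i < r := by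
    intro i hi
    rw [Finset.mem_Ico] at hi
    refine ⟨lt_of_lt_of_le hi₀r (hmono.monotone hi.1), ?_⟩
    have h1 : X i ≤ X (i₁ - 1) := hmono.monotone (by omega)
    linarith
  have hnegz : ∀ i ∈ Finset.Ico k₁ k₀, -r < X i ∧ X i < 0 := by
    intro i hi
    rw [Finset.mem_Ico] at hi
    refine ⟨lt_of_lt_of_le hk₁r (hmono.monotone hi.1), ?_⟩
    have h1 : X i ≤ X (k₀ - 1) := hmono.monotone (by omega)
    linarith
  refine ⟨insert (0:ℝ) ((Finset.Ico i₀ i₁ ∪ Finset.Ico k₁ k₀).image X), ?_, ?_, ?_⟩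
  · intro z hz
    rw [Finset.mem_insert, Finset.mem_image] at hz
    rcases hz with hz | ⟨i, hi, rfl⟩
    · subst hz; exact ⟨by linarith, hr⟩
    · rw [Finset.mem_union] at hi
      rcases hi with hi | hi
      · obtain ⟨h1, h2⟩ := hposz i hi; exact ⟨by linarith, h2⟩
      · obtain ⟨h1, h2⟩ := hnegz i hi; exact ⟨h1, by linarith⟩
  · intro j z hz hne
    by_contra hzF
    rw [Finset.mem_insert, Finset.mem_image] at hzF
    push_neg at hzF
    obtain ⟨hz0, hzim⟩ := hzF
    -- z is not a breakpoint in range; show omega = 0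
    obtain ⟨i, hil, hir, himin⟩ := exists_least_lt X hmono htop hbot z
    have hil' : X (i - 1) < z := by
      rcases lt_or_eq_of_le hil with h | h
      · exact h
      · exfalso
        -- z = X (i-1) is a breakpoint in (-r, r)
        rcases lt_trichotomy z 0 with hzlt | hzeq | hzgt
        · refine hzim (i-1) ?_ h
          simp only [Finset.mem_union, Finset.mem_Ico]
          refine Or.inr ⟨hk₁min _ (by rw [h]; exact hz.1), ?_⟩
          have h5 : X (i-1) < X k₀ := by rw [h]; exact lt_of_lt_of_le hzlt hk₀r
          have := hmono.lt_iff_lt.mp h5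
          omega
        · exact hz0 hzeq
        · refine hzim (i-1) ?_ h
          simp only [Finset.mem_union, Finset.mem_Ico]
          refine Or.inl ⟨hi₀min _ (by rw [h]; exact hzgt), ?_⟩
          have h5 : X (i-1) < X i₁ := by rw [h]; exact lt_of_lt_of_le hz.2 hi₁r
          have := hmono.lt_iff_lt.mp h5
          omega
    have hrp : rightPoly f z = p i := rightPoly_of_mem heval i z hil hir
    have hlp : leftPoly f z = p i := leftPoly_of_mem heval i z hil' hir.le
    apply hne
    unfold omega rderiv lderiv
    rw [hrp, hlp, sgnR_eq_sgnL hz0]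
    ring
  · -- the Jensen identity
    have hfr : f r = (p i₁).eval r := heval i₁ r ⟨hi₁l.le, hi₁r⟩
    have hfnr : f (-r) = (p k₁).eval (-r) := heval k₁ (-r) ⟨hk₁l, hk₁r.le⟩
    have hf0R : f 0 = (p i₀).eval 0 := heval i₀ 0 ⟨hi₀l, hi₀r.le⟩
    have hf0L : f 0 = (p k₀).eval 0 := heval k₀ 0 ⟨hk₀l.le, hk₀r⟩
    have hrp0 : rightPoly f 0 = p i₀ := rightPoly_of_mem heval i₀ 0 hi₀l hi₀r
    have hlp0 : leftPoly f 0 = p k₀ := leftPoly_of_mem heval k₀ 0 hk₀l hk₀r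
    -- Taylor expansions at 0
    have hSA : (p i₀).eval r = f 0 + ∑ j ∈ Finset.Icc 1 n,
        rderiv f j 0 * r ^ j / (Nat.factorial j : ℝ) := by
      have h := poly_taylor_split (p i₀) n (hdeg i₀) 0 r
      rw [h, ← hf0R]
      congr 1
      refine Finset.sum_congr rfl fun j _ => ?_
      have hr0 : rderiv f j 0
          = ((fun q : Polynomial ℝ => Polynomial.derivative q)^[j] (p i₀)).eval 0 := by
        unfold rderiv; rw [hrp0]
      rw [hr0, sub_zero]
    have hSB : (p k₀).eval (-r) = f 0 + ∑ j ∈ Finset.Icc 1 n,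
        lderiv f j 0 * (-r) ^ j / (Nat.factorial j : ℝ) := by
      have h := poly_taylor_split (p k₀) n (hdeg k₀) 0 (-r)
      rw [h, ← hf0L]
      congr 1
      refine Finset.sum_congr rfl fun j _ => ?_
      have hl0 : lderiv f j 0
          = ((fun q : Polynomial ℝ => Polynomial.derivative q)^[j] (p k₀)).eval 0 := by
        unfold lderiv; rw [hlp0]
      rw [hl0, sub_zero]
    -- telescoping
    have htelR : (p i₁).eval r - (p i₀).eval r
        = ∑ i ∈ Finset.Ico i₀ i₁, ((p (i+1)).eval r - (p i).eval r) :=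
      telescope (fun i => (p i).eval r) i₀ i₁ hi01
    have htelL : (p k₀).eval (-r) - (p k₁).eval (-r)
        = ∑ i ∈ Finset.Ico k₁ k₀, ((p (i+1)).eval (-r) - (p i).eval (-r)) :=
      telescope (fun i => (p i).eval (-r)) k₁ k₀ hk10
    -- convert step sums to omega sums
    have hGpos : ∑ i ∈ Finset.Ico i₀ i₁, ((p (i+1)).eval r - (p i).eval r)
        = ∑ i ∈ Finset.Ico i₀ i₁, ∑ j ∈ Finset.Icc 1 n,
            omega f j (X i) * (r - |X i|)^j := by
      refine Finset.sum_congr rfl fun i hi => ?_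
      rw [step_eq n f X p hmono heval hdeg i r]
      refine Finset.sum_congr rfl fun j _ => ?_
      obtain ⟨h1, h2⟩ := hposz i hi
      rw [abs_of_pos h1, omega_eq_tau_of_pos f j h1]
    have hGneg : ∑ i ∈ Finset.Ico k₁ k₀, ((p (i+1)).eval (-r) - (p i).eval (-r))
        = -∑ i ∈ Finset.Ico k₁ k₀, ∑ j ∈ Finset.Icc 1 n,
            omega f j (X i) * (r - |X i|)^j := by
      rw [← Finset.sum_neg_distrib]
      refine Finset.sum_congr rfl fun i hi => ?_
      rw [step_eq n f X p hmono heval hdeg i (-r), ← Finset.sum_neg_distrib]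
      refine Finset.sum_congr rfl fun j _ => ?_
      obtain ⟨h1, h2⟩ := hnegz i hi
      rw [omega_neg_side f j r h2, neg_neg]
    -- the term at 0
    have hG0 : ∑ j ∈ Finset.Icc 1 n, omega f j 0 * (r - |(0:ℝ)|)^j
        = (∑ j ∈ Finset.Icc 1 n, rderiv f j 0 * r^j / (Nat.factorial j : ℝ))
          + ∑ j ∈ Finset.Icc 1 n, lderiv f j 0 * (-r)^j / (Nat.factorial j : ℝ) := by
      rw [← Finset.sum_add_distrib]
      exact Finset.sum_congr rfl fun j _ => omega_zero_term f j r
    -- split the F-sum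
    have h0notmem : (0:ℝ) ∉ (Finset.Ico i₀ i₁ ∪ Finset.Ico k₁ k₀).image X := by
      rw [Finset.mem_image]
      rintro ⟨i, hi, hXi⟩
      rw [Finset.mem_union] at hi
      rcases hi with hi | hi
      · exact absurd hXi (ne_of_gt (hposz i hi).1)
      · exact absurd hXi (ne_of_lt (hnegz i hi).2)
    have hdisj : Disjoint (Finset.Ico i₀ i₁) (Finset.Ico k₁ k₀) := by
      rw [Finset.disjoint_left]
      intro i hi1 hi2
      exact absurd ((hposz i hi1).1.trans (hnegz i hi2).2) (lt_irrefl 0)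
    have hinj : ∀ a ∈ (Finset.Ico i₀ i₁ ∪ Finset.Ico k₁ k₀),
        ∀ b ∈ (Finset.Ico i₀ i₁ ∪ Finset.Ico k₁ k₀), X a = X b → a = b :=
      fun a _ b _ h => hmono.injective h
    rw [Finset.sum_insert h0notmem, Finset.sum_image hinj, Finset.sum_union hdisj]
    -- put everything together
    have e1 : f r = (p i₀).eval r + ∑ i ∈ Finset.Ico i₀ i₁, ∑ j ∈ Finset.Icc 1 n,
        omega f j (X i) * (r - |X i|)^j := by
      rw [hfr, ← hGpos]; linarith [htelR]
    have e2 : f (-r) = (p k₀).eval (-r) + ∑ i ∈ Finset.Ico k₁ k₀, ∑ j ∈ Finset.Icc 1 n,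
        omega f j (X i) * (r - |X i|)^j := by
      rw [hfnr]
      have := htelL
      rw [hGneg] at this
      linarith
    rw [e1, e2, hSA, hSB, hG0]
    ring

theorem statement5' (n : ℕ) (hn : 1 ≤ n) (f : ℝ → ℝ)
    (hf : Trop.IsTropicalMeromorphic n f) :
    ∀ r : ℝ, 0 < r → Trop.Tchar n r f = Trop.Tchar n r (fun x => -(f x)) + f 0 := by
  obtain ⟨⟨hcont, X, p, hmono, htop, hbot, heval, hdeg, -⟩, -⟩ := hf
  intro r hr
  obtain ⟨F, hF1, hF2, hcore⟩ := core n f X p hmono htop hbot heval hdeg r hr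
  have hex : ∀ z : ℝ, (∃ q, IsRightPiece f z q) ∧ (∃ q, IsLeftPiece f z q) := by
    intro z
    obtain ⟨i, h1, h2, -⟩ := exists_least_lt X hmono htop hbot z
    obtain ⟨k, h3, h4, -⟩ := exists_least_le X hmono htop hbot z
    constructor
    · exact ⟨p i, X i - z, by linarith, fun y hy =>
        heval i y ⟨le_trans h1 hy.1, by have := hy.2; linarith⟩⟩
    · exact ⟨p k, z - X (k-1), by linarith, fun y hy =>
        heval k y ⟨by have := hy.1; linarith, le_trans hy.2 h4⟩⟩
  have honeg : ∀ (j : ℕ) (z : ℝ), omega (fun y => -(f y)) j z = -(omega f j z) :=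
    omega_neg f hex
  have hNf : ∀ j : ℕ, Npole j r f = (1/2) * ∑ z ∈ F,
      (if omega f j z < 0 then -(omega f j z) * (r - |z|)^j else 0) :=
    fun j => Npole_eq_sum f j r F (fun z hz hlt => hF2 j z hz (ne_of_lt hlt)) hF1
  have hNg : ∀ j : ℕ, Npole j r (fun y => -(f y)) = (1/2) * ∑ z ∈ F,
      (if 0 < omega f j z then omega f j z * (r - |z|)^j else 0) := by
    intro j
    rw [Npole_eq_sum (fun y => -(f y)) j r F
      (fun z hz hlt => hF2 j z hz (fun h0 => by rw [honeg, h0] at hlt; simp at hlt)) hF1]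
    simp only [honeg, neg_lt_zero, neg_neg]
  have hdiff : ∀ j : ℕ, Npole j r f - Npole j r (fun y => -(f y))
      = (1/2) * ∑ z ∈ F, (-(omega f j z) * (r - |z|)^j) := by
    intro j
    rw [hNf j, hNg j, ← mul_sub, ← Finset.sum_sub_distrib]
    congr 1
    refine Finset.sum_congr rfl fun z hz => ?_
    rcases lt_trichotomy (omega f j z) 0 with h | h | h
    · rw [if_pos h, if_neg (by linarith), sub_zero]
    · rw [if_neg (by rw [h]; exact lt_irrefl 0), if_neg (by rw [h]; exact lt_irrefl 0), h]
      ring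
    · rw [if_neg (by linarith), if_pos h]
      ring
  have hsum : ∑ j ∈ Finset.Icc 1 n, (Npole j r f - Npole j r (fun y => -(f y)))
      = -(1/2) * (f r + f (-r) - 2 * f 0) := by
    calc ∑ j ∈ Finset.Icc 1 n, (Npole j r f - Npole j r (fun y => -(f y)))
        = ∑ j ∈ Finset.Icc 1 n, (1/2) * ∑ z ∈ F, (-(omega f j z) * (r - |z|)^j) :=
          Finset.sum_congr rfl fun j _ => hdiff j
      _ = (1/2) * ∑ j ∈ Finset.Icc 1 n, ∑ z ∈ F, (-(omega f j z) * (r - |z|)^j) := by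
          rw [Finset.mul_sum]
      _ = (1/2) * ∑ z ∈ F, ∑ j ∈ Finset.Icc 1 n, (-(omega f j z) * (r - |z|)^j) := by
          rw [Finset.sum_comm]
      _ = -(1/2) * (f r + f (-r) - 2 * f 0) := by
          simp only [neg_mul, Finset.sum_neg_distrib]
          rw [← hcore]
          ring
  have hm : mProx r f = mProx r (fun x => -(f x)) + (f r + f (-r))/2 := by
    simp only [mProx]
    have h1 := max_zero_sub_max_neg_zero_eq_self (f r)
    have h2 := max_zero_sub_max_neg_zero_eq_self (f (-r))
    linarith
  rw [Tchar, Tchar]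
  have hS : ∑ j ∈ Finset.Icc 1 n, Npole j r f
      - ∑ j ∈ Finset.Icc 1 n, Npole j r (fun x => -(f x))
      = -(1/2) * (f r + f (-r) - 2 * f 0) := by
    rw [← Finset.sum_sub_distrib]
    exact hsum
  linarith [hm, hS]

end TropAux
end


/-- the `n`-th Jensen formula in characteristic-function form:
`T(r, f) = T(r, 1₀ ⊘ f) + f(0)` for every `r > 0`. -/
theorem statement5 (n : ℕ) (hn : 1 ≤ n) (f : ℝ → ℝ)
    (hf : Trop.IsTropicalMeromorphic n f) :
    ∀ r : ℝ, 0 < r → Trop.Tchar n r f = Trop.Tchar n r (fun x => -(f x)) + f 0 :=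
  TropAux.statement5' n hn f hf
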